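/- Let d ≥ 1 and r ≥ 1 be natural numbers and let G be a simple graph on n vertices with average degree at most d (i.e. 2·e(G) ≤ d·n). Let k be a natural number with (k + d + 5)·(1 + C(2(d+1), r−1)) + 1 + C(2(d+1), r−1) ≤ n/2, where C(a,b) denotes the binomial coefficient (equivalently, k ≤ (n/2 − 1)/(1 + C(2(d+1), r−1)) − d − 5). If H is any simple graph on n vertices that shares at least n − k common cards with G, then G and H contain the same number of cliques of size r. -/

import Mathlib

open SimpleGraph

/-- The degree of a vertex, as the cardinality of its neighbour set. -/
noncomputable def gdeg {V : Type} (G : SimpleGraph V) (v : V) : ℕ :=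
  (G.neighborSet v).ncard

/-- The number of edges of a graph. -/
noncomputable def ecount {V : Type} (G : SimpleGraph V) : ℕ :=
  G.edgeSet.ncard

/-- The card `G - v`: the induced subgraph on the complement of `v`. -/
def gcard {V : Type} (G : SimpleGraph V) (v : V) : SimpleGraph {w : V // w ≠ v} :=
  G.induce {w : V | w ≠ v}

/-- The number of vertices of degree exactly `t`. -/
noncomputable def dcount {V : Type} (G : SimpleGraph V) (t : ℕ) : ℕ :=
  {v : V | gdeg G v = t}.ncard

/-- `G` and `H` share at least `m` common cards: there are `m` vertices of `G`,
injectively matched with vertices of `H`, whose cards are pairwise isomorphic. -/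
def SharesCards {n : ℕ} (G H : SimpleGraph (Fin n)) (m : ℕ) : Prop :=
  ∃ (S : Finset (Fin n)) (f : Fin n → Fin n),
    m ≤ S.card ∧ Set.InjOn f ↑S ∧
    ∀ v ∈ S, Nonempty (gcard G v ≃g gcard H (f v))

/-- The number of `r`-cliques of a graph. -/
noncomputable def cliqueCount {V : Type} (G : SimpleGraph V) (r : ℕ) : ℕ :=
  {s : Finset V | G.IsNClique r s}.ncard

open Finset

/-!
For a matched vertex `v`, the `j`-cliques of `G` are those of the card `G - v` together with the
`cliqueDegree G j v` cliques through `v`. As `G - v ≅ H - f v`, on the matched vertices the clique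
degrees of `G` are those of `H` shifted by a constant `Δ`, the difference of the numbers of
`j`-cliques of `G` and `H`.

Suppose `Δ ≠ 0` and let `N(T)` count the vertices of `G` of clique degree at most `T`. Passing
from `G` to `H` along the matching shifts the threshold by `Δ` and loses at most the `k` unmatched
vertices, while passing back through one matched pair of cards `G - v ≅ H - f v` costs at most
`deg v + 1`. Hence `N(T + Δ) ≤ N(T) + k + deg v + 1` and `N(T) ≤ (T / Δ + 1) (k + deg v + 1)`.
But at least half of the vertices have degree at most `2(d+1)`, hence at most `C(2(d+1), r-1)`
cliques through them, so `N(C(2(d+1), r-1)) ≥ n/2`: a contradiction once `deg v ≤ d + 1`.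

Such a pivot `v` exists: `Δ ≠ 0` puts every matched vertex of `G` or of `H` into an `r`-clique,
so degree counting gives `r ≤ 2(d+1)`, hence `C(2(d+1), r-1) ≥ 2(d+1)` and `k` is small enough
that some matched vertex has degree at most `d + 1`. Its degree in `H` is the same because `G`
and `H` have equally many edges, which is the case `j = 2` of the same argument.
-/

theorem Nat.self_le_choose {m i : ℕ} (hi : 0 < i) (hm : i < m) : m ≤ m.choose i := by
  induction m generalizing i with
  | zero => omega
  | succ m ih =>
    obtain ⟨i, rfl⟩ := Nat.exists_eq_add_of_le' hi
    rcases i.eq_zero_or_pos with rfl | hi'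
    · simp
    · rw [Nat.choose_succ_succ']
      have := ih hi' (by omega)
      have := Nat.choose_pos (n := m) (k := i + 1) (by omega)
      omega

theorem Nat.le_div_add_one_mul_of_le_add {P : ℕ → ℕ} {D W : ℕ} (hD : 0 < D)
    (hbase : ∀ T < D, P T ≤ W) (hstep : ∀ T, P (T + D) ≤ P T + W) (T : ℕ) :
    P T ≤ (T / D + 1) * W := by
  induction T using Nat.strong_induction_on with
  | _ T ih =>
    rcases lt_or_ge T D with hT | hT
    · simpa [Nat.div_eq_of_lt hT] using hbase T hT
    · obtain ⟨T, rfl⟩ := Nat.exists_eq_add_of_le' hT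
      have := ih T (by omega)
      rw [Nat.add_div_right T hD, add_mul _ 1, one_mul]
      linarith [hstep T]

theorem Set.InjOn.card_filter_le_add_of_imp_comp {α β : Type*} [Fintype α] [Fintype β]
    [DecidableEq α] {p : α → Prop} {q : β → Prop} [DecidablePred p] [DecidablePred q]
    {S : Finset α} {f : α → β} (hf : Set.InjOn f S) (h : ∀ u ∈ S, p u → q (f u)) :
    #{u | p u} ≤ #{w | q w} + (Fintype.card α - #S) := by
  rw [← Finset.card_compl]
  calc #{u | p u} ≤ #({u ∈ S | p u} ∪ Sᶜ) :=
        Finset.card_le_card fun u hu => by by_cases huS : u ∈ S <;> simp_all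
    _ ≤ #{u ∈ S | p u} + #Sᶜ := Finset.card_union_le _ _
    _ ≤ #{w | q w} + #Sᶜ := by
        gcongr
        exact Finset.card_le_card_of_injOn f (fun u hu => by simp_all)
          (hf.mono fun u hu => (Finset.mem_filter.1 hu).1)

theorem Set.InjOn.card_filter_le_add_of_comp_imp {α β : Type*} [Fintype α] [Fintype β]
    [DecidableEq β] {p : α → Prop} {q : β → Prop} [DecidablePred p] [DecidablePred q]
    {S : Finset α} {f : α → β} (hf : Set.InjOn f S) (h : ∀ u ∈ S, q (f u) → p u) :
    #{w | q w} ≤ #{u | p u} + (Fintype.card β - #S) := by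
  rw [← Finset.card_image_of_injOn hf, ← Finset.card_compl]
  calc #{w | q w} ≤ #({u ∈ S | p u}.image f ∪ (S.image f)ᶜ) := by
        refine Finset.card_le_card fun w hw => ?_
        by_cases hwS : w ∈ S.image f
        · obtain ⟨u, hu, rfl⟩ := Finset.mem_image.1 hwS
          simp only [Finset.mem_filter, Finset.mem_univ, true_and] at hw
          exact Finset.mem_union_left _
            (Finset.mem_image_of_mem f (Finset.mem_filter.2 ⟨hu, h u hu hw⟩))
        · exact Finset.mem_union_right _ (Finset.mem_compl.2 hwS)
    _ ≤ #({u ∈ S | p u}.image f) + #(S.image f)ᶜ := Finset.card_union_le _ _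
    _ ≤ #{u | p u} + #(S.image f)ᶜ := by
        gcongr
        exact Finset.card_image_le.trans (Finset.card_le_card (Finset.filter_subset_filter _
          (Finset.subset_univ S)))

theorem cliqueCount_eq_of_le_one {V : Type} {A B : SimpleGraph V} {j : ℕ} (hj : j ≤ 1) :
    cliqueCount A j = cliqueCount B j := by
  have key (C : SimpleGraph V) (s : Finset V) : C.IsNClique j s ↔ #s = j :=
    ⟨IsNClique.card_eq, fun h => ⟨IsClique.of_subsingleton (card_le_one.1 (h ▸ hj)), h⟩⟩
  simp only [cliqueCount, key]

theorem SimpleGraph.Iso.isNClique_map_iff {V W : Type} {A : SimpleGraph V} {B : SimpleGraph W}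
    (φ : A ≃g B) {j : ℕ} {s : Finset V} :
    B.IsNClique j (s.map φ.toEquiv.toEmbedding) ↔ A.IsNClique j s := by
  simp [isNClique_iff, isClique_iff, Set.Pairwise, φ.map_adj_iff]

section Degree

open scoped Classical

variable {V : Type} [Fintype V]

theorem ecount_eq_card_edgeFinset (A : SimpleGraph V) : ecount A = #A.edgeFinset := by
  rw [ecount, ← coe_edgeFinset, Set.ncard_coe_finset]

theorem card_mul_le_sum_degree (A : SimpleGraph V) {X : Finset V} {t : ℕ}
    (h : ∀ x ∈ X, t ≤ A.degree x) : #X * t ≤ 2 * #A.edgeFinset := by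
  rw [← sum_degrees_eq_twice_card_edges]
  calc #X * t ≤ ∑ x ∈ X, A.degree x := by simpa using card_nsmul_le_sum X _ t h
    _ ≤ ∑ x, A.degree x := sum_le_sum_of_subset (subset_univ X)

theorem exists_mem_degree_le (A : SimpleGraph V) {d k : ℕ} {S : Finset V}
    (havg : 2 * #A.edgeFinset ≤ d * Fintype.card V) (hS : Fintype.card V ≤ #S + k)
    (hk : k * (d + 2) < 2 * Fintype.card V) : ∃ v ∈ S, A.degree v ≤ d + 1 := by
  by_contra! h
  have := card_mul_le_sum_degree A (X := S) (t := d + 2) fun x hx => h x hx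
  nlinarith

end Degree

section CliqueDegree

open scoped Classical

variable {V W : Type} [Fintype V] [DecidableEq V] [Fintype W] [DecidableEq W]

noncomputable def cliqueDegree (A : SimpleGraph V) (j : ℕ) (u : V) : ℕ :=
  #{s ∈ A.cliqueFinset j | u ∈ s}

noncomputable def sublevelCount (A : SimpleGraph V) (j T : ℕ) : ℕ :=
  #{u | cliqueDegree A j u ≤ T}

theorem cliqueCount_eq_card_cliqueFinset (A : SimpleGraph V) (j : ℕ) :
    cliqueCount A j = #(A.cliqueFinset j) := by
  change (A.cliqueSet j).ncard = _
  rw [← coe_cliqueFinset, Set.ncard_coe_finset]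

theorem cliqueDegree_le_choose (A : SimpleGraph V) (j : ℕ) (u : V) :
    cliqueDegree A j u ≤ (A.degree u).choose (j - 1) := by
  rw [← card_neighborFinset_eq_degree, ← card_powersetCard]
  refine card_le_card_of_injOn (fun s => s.erase u) (fun s hs => ?_) (fun s hs t ht hst => ?_)
  · simp only [coe_filter, mem_cliqueFinset_iff, Set.mem_ofPred_eq] at hs
    rw [mem_coe, mem_powersetCard, card_erase_of_mem hs.2, hs.1.card_eq]
    refine ⟨fun w hw => ?_, rfl⟩
    rw [mem_erase] at hw
    exact (A.mem_neighborFinset _ _).2 (hs.1.isClique hs.2 hw.2 (Ne.symm hw.1))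
  · simp only [coe_filter, Set.mem_ofPred_eq] at hs ht
    rw [← insert_erase hs.2, ← insert_erase ht.2]
    exact congrArg _ hst

theorem le_degree_of_cliqueDegree_pos {A : SimpleGraph V} {j : ℕ} {u : V}
    (h : 0 < cliqueDegree A j u) : j - 1 ≤ A.degree u := by
  by_contra! hlt
  have := cliqueDegree_le_choose A j u
  rw [Nat.choose_eq_zero_of_lt hlt] at this
  omega

theorem cliqueDegree_two (A : SimpleGraph V) (u : V) : cliqueDegree A 2 u = A.degree u := by
  rw [← card_neighborFinset_eq_degree, cliqueDegree]
  symm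
  refine card_nbij (fun w => {u, w}) (fun w hw => ?_) (fun w hw w' hw' h => ?_) (fun s hs => ?_)
  · rw [mem_coe, mem_neighborFinset] at hw
    simp [isNClique_iff, hw, hw.ne]
  · rw [mem_coe, mem_neighborFinset] at hw
    have : w ∈ ({u, w'} : Finset V) := by simp only at h; rw [← h]; simp
    simpa [hw.ne'] using this
  · simp only [coe_filter, mem_cliqueFinset_iff, Set.mem_ofPred_eq] at hs
    obtain ⟨w, hw⟩ := card_eq_one.1 (by rw [card_erase_of_mem hs.2, hs.1.card_eq] :
      #(s.erase u) = 1)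
    have hws : w ∈ s.erase u := hw ▸ mem_singleton_self w
    refine ⟨w, ?_, ?_⟩
    · exact (A.mem_neighborFinset _ _).2 (hs.1.isClique hs.2 (mem_of_mem_erase hws)
        (Ne.symm (ne_of_mem_erase hws)))
    · simp only [← hw, insert_erase hs.2]

theorem sum_cliqueDegree (A : SimpleGraph V) (j : ℕ) :
    ∑ u, cliqueDegree A j u = j * #(A.cliqueFinset j) := by
  have := sum_card_bipartiteAbove_eq_sum_card_bipartiteBelow (s := univ)
    (t := A.cliqueFinset j) (r := fun u s => u ∈ s)
  simp only [bipartiteAbove, bipartiteBelow, filter_mem_eq_inter, univ_inter] at this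
  simp only [cliqueDegree, this, mul_comm,
    sum_const_nat fun s hs => (mem_cliqueFinset_iff.1 hs).card_eq]

theorem card_cliqueFinset_two (A : SimpleGraph V) : #(A.cliqueFinset 2) = #A.edgeFinset := by
  have := sum_cliqueDegree A 2
  simp only [cliqueDegree_two, sum_degrees_eq_twice_card_edges] at this
  omega

theorem card_le_two_mul_sublevelCount (A : SimpleGraph V) {d : ℕ}
    (havg : 2 * #A.edgeFinset ≤ d * Fintype.card V) (j : ℕ) :
    Fintype.card V ≤ 2 * sublevelCount A j ((2 * (d + 1)).choose (j - 1)) := by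
  have hhigh := card_mul_le_sum_degree A (X := {u | 2 * (d + 1) < A.degree u})
    (t := 2 * (d + 1) + 1) fun x hx => (mem_filter.1 hx).2
  have hlow :
      #{u | A.degree u ≤ 2 * (d + 1)} ≤ sublevelCount A j ((2 * (d + 1)).choose (j - 1)) :=
    card_le_card <| monotone_filter_right _ fun u _ hu =>
      (cliqueDegree_le_choose A j u).trans (Nat.choose_le_choose _ hu)
  have hsplit :=
    card_filter_add_card_filter_not (s := univ) (p := fun u => A.degree u ≤ 2 * (d + 1))
  simp only [not_le, card_univ] at hsplit
  nlinarith

theorem Set.InjOn.card_mul_le_of_le_cliqueDegree {α : Type*} {A : SimpleGraph V}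
    {S : Finset α} {f : α → V} (hf : Set.InjOn f S) {j Δ : ℕ}
    (h : ∀ u ∈ S, Δ ≤ cliqueDegree A j (f u)) :
    #S * Δ ≤ j * #(A.cliqueFinset j) := by
  classical
  rw [← sum_cliqueDegree, ← Finset.card_image_of_injOn hf]
  calc #(S.image f) * Δ ≤ ∑ w ∈ S.image f, cliqueDegree A j w := by
        simpa using Finset.card_nsmul_le_sum _ _ Δ (by simpa using h)
    _ ≤ _ := Finset.sum_le_sum_of_subset (Finset.subset_univ _)

theorem map_cliqueFinset_gcard (A : SimpleGraph V) (v : V) (j : ℕ) :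
    ((gcard A v).cliqueFinset j).map (mapEmbedding (.subtype _)).toEmbedding =
      {s ∈ A.cliqueFinset j | v ∉ s} := by
  ext s
  simp only [mem_map, mem_cliqueFinset_iff, mem_filter, RelEmbedding.coe_toEmbedding,
    mapEmbedding_apply]
  constructor
  · rintro ⟨t, ht, rfl⟩
    exact ⟨(isNClique_induce_iff _ _ _).1 ht, by simp⟩
  · rintro ⟨hs, hv⟩
    have hsv : ∀ x ∈ s, x ≠ v := fun x hx hxv => hv (hxv ▸ hx)
    refine ⟨s.subtype (· ≠ v), ?_, subtype_map_of_mem hsv⟩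
    rw [gcard, isNClique_induce_iff]
    convert hs
    exact subtype_map_of_mem hsv

theorem card_cliqueFinset_eq_cliqueDegree_add (A : SimpleGraph V) (v : V) (j : ℕ) :
    #(A.cliqueFinset j) = cliqueDegree A j v + #((gcard A v).cliqueFinset j) := by
  rw [cliqueDegree, ← card_filter_add_card_filter_not (p := (v ∈ ·)),
    ← map_cliqueFinset_gcard, card_map]

theorem cliqueDegree_gcard (A : SimpleGraph V) (v : V) (j : ℕ) (u : {w : V // w ≠ v}) :
    cliqueDegree (gcard A v) j u = #{s ∈ A.cliqueFinset j | v ∉ s ∧ ↑u ∈ s} := by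
  rw [← filter_filter, ← map_cliqueFinset_gcard, filter_map, card_map, cliqueDegree]
  simp [Function.comp_def, u.2]

theorem cliqueDegree_gcard_le (A : SimpleGraph V) (v : V) (j : ℕ) (u : {w : V // w ≠ v}) :
    cliqueDegree (gcard A v) j u ≤ cliqueDegree A j u := by
  rw [cliqueDegree_gcard]
  exact card_le_card (monotone_filter_right _ fun _ _ h => h.2)

theorem cliqueDegree_gcard_of_not_adj {A : SimpleGraph V} {v : V} {u : {w : V // w ≠ v}}
    (h : ¬ A.Adj u v) (j : ℕ) : cliqueDegree (gcard A v) j u = cliqueDegree A j u := by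
  rw [cliqueDegree_gcard, cliqueDegree]
  congr 1
  refine filter_congr fun s hs => ⟨And.right, fun hu => ⟨fun hv => ?_, hu⟩⟩
  exact h ((mem_cliqueFinset_iff.1 hs).isClique hu hv u.2)

theorem sublevelCount_le_sublevelCount_gcard_add_one (A : SimpleGraph V) (v : V) (j T : ℕ) :
    sublevelCount A j T ≤ sublevelCount (gcard A v) j T + 1 := by
  rw [sublevelCount, sublevelCount, ← card_map (.subtype _)]
  refine (card_le_card fun u hu => ?_).trans (card_insert_le v _)
  rw [mem_insert, mem_map]
  refine or_iff_not_imp_left.2 fun huv => ⟨⟨u, huv⟩, ?_, rfl⟩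
  exact mem_filter.2 ⟨mem_univ _, (cliqueDegree_gcard_le A v j _).trans (mem_filter.1 hu).2⟩

theorem sublevelCount_gcard_le_add_degree (A : SimpleGraph V) (v : V) (j T : ℕ) :
    sublevelCount (gcard A v) j T ≤ sublevelCount A j T + A.degree v := by
  rw [sublevelCount, sublevelCount, ← card_map (.subtype _), ← card_neighborFinset_eq_degree]
  refine (card_le_card fun u hu => ?_).trans (card_union_le _ _)
  obtain ⟨w, hw, rfl⟩ := mem_map.1 hu
  rw [mem_union, mem_neighborFinset, mem_filter]
  by_cases h : A.Adj w v
  · exact Or.inr h.symm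
  · exact Or.inl ⟨mem_univ _, cliqueDegree_gcard_of_not_adj h j ▸ (mem_filter.1 hw).2⟩

theorem degree_gcard (A : SimpleGraph V) (v : V) (u : {w : V // w ≠ v}) :
    (gcard A v).degree u = #((A.neighborFinset u).erase v) := by
  rw [← card_neighborFinset_eq_degree, ← card_map (.subtype _)]
  congr 1
  ext w
  simp only [mem_map, mem_neighborFinset, mem_erase, Function.Embedding.coe_subtype]
  constructor
  · rintro ⟨w, hw, rfl⟩
    exact ⟨w.2, hw⟩
  · rintro ⟨hw, hadj⟩
    exact ⟨⟨w, hw⟩, hadj, rfl⟩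

theorem degree_gcard_le (A : SimpleGraph V) (v : V) (u : {w : V // w ≠ v}) :
    (gcard A v).degree u ≤ A.degree u := by
  rw [degree_gcard, ← card_neighborFinset_eq_degree]
  exact card_erase_le

theorem degree_le_degree_gcard_add_one (A : SimpleGraph V) (v : V) (u : {w : V // w ≠ v}) :
    A.degree u ≤ (gcard A v).degree u + 1 := by
  rw [degree_gcard, ← card_neighborFinset_eq_degree]
  have := pred_card_le_card_erase (s := A.neighborFinset u) (a := v)
  omega

theorem SimpleGraph.Iso.map_cliqueFinset {A : SimpleGraph V} {B : SimpleGraph W} (φ : A ≃g B)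
    (j : ℕ) : (A.cliqueFinset j).map (mapEmbedding φ.toEquiv.toEmbedding).toEmbedding =
      B.cliqueFinset j := by
  ext t
  simp only [mem_map, mem_cliqueFinset_iff, RelEmbedding.coe_toEmbedding, mapEmbedding_apply]
  refine ⟨fun ⟨s, hs, hst⟩ => hst ▸ φ.isNClique_map_iff.2 hs, fun ht => ?_⟩
  refine ⟨t.map φ.symm.toEquiv.toEmbedding, ?_, ?_⟩
  · rw [← φ.isNClique_map_iff]
    simpa [Finset.map_map, RelIso.self_comp_symm] using ht
  · simp [Finset.map_map, RelIso.self_comp_symm]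

theorem SimpleGraph.Iso.card_cliqueFinset_eq {A : SimpleGraph V} {B : SimpleGraph W} (φ : A ≃g B)
    (j : ℕ) : #(B.cliqueFinset j) = #(A.cliqueFinset j) := by
  rw [← φ.map_cliqueFinset, card_map]

theorem SimpleGraph.Iso.cliqueDegree_eq {A : SimpleGraph V} {B : SimpleGraph W} (φ : A ≃g B)
    (j : ℕ) (u : V) : cliqueDegree B j (φ u) = cliqueDegree A j u := by
  rw [cliqueDegree, ← φ.map_cliqueFinset, filter_map, card_map, cliqueDegree]
  exact congrArg card (filter_congr fun s _ => mem_map' _)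

theorem SimpleGraph.Iso.sublevelCount_eq {A : SimpleGraph V} {B : SimpleGraph W} (φ : A ≃g B)
    (j T : ℕ) : sublevelCount B j T = sublevelCount A j T := by
  rw [sublevelCount, ← map_univ_equiv φ.toEquiv, filter_map, card_map, sublevelCount]
  simp [φ.cliqueDegree_eq]

theorem sublevelCount_le_of_iso_gcard {A : SimpleGraph V} {B : SimpleGraph W} {v : V} {w : W}
    (φ : gcard A v ≃g gcard B w) (j T : ℕ) :
    sublevelCount A j T ≤ sublevelCount B j T + B.degree w + 1 := by
  have h₁ := sublevelCount_le_sublevelCount_gcard_add_one A v j T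
  have h₂ := sublevelCount_gcard_le_add_degree B w j T
  rw [φ.sublevelCount_eq] at h₂
  omega

theorem cliqueDegree_add_card_cliqueFinset_of_iso_gcard {A : SimpleGraph V} {B : SimpleGraph W}
    {v : V} {w : W} (φ : gcard A v ≃g gcard B w) (j : ℕ) :
    cliqueDegree A j v + #(B.cliqueFinset j) = cliqueDegree B j w + #(A.cliqueFinset j) := by
  rw [card_cliqueFinset_eq_cliqueDegree_add A v, card_cliqueFinset_eq_cliqueDegree_add B w,
    φ.card_cliqueFinset_eq]
  ring

theorem card_le_card_filter_le_degree_add_one_of_iso_gcard {A : SimpleGraph V}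
    {B : SimpleGraph W} {v : V} {w : W} (φ : gcard A v ≃g gcard B w) {X : Finset W} {t : ℕ}
    (hX : ∀ x ∈ X, t < B.degree x) : #X ≤ #{u | t ≤ A.degree u} + 1 := by
  have hsub : (X.subtype (· ≠ w)).map (φ.symm.toEquiv.toEmbedding.trans (.subtype _)) ⊆
      ({u | t ≤ A.degree u} : Finset V) := by
    intro u hu
    obtain ⟨x, hx, rfl⟩ := mem_map.1 hu
    have h₁ := hX x (mem_subtype.1 hx)
    have h₂ := degree_le_degree_gcard_add_one B w x
    have h₃ := degree_gcard_le A v (φ.symm x)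
    rw [φ.symm.degree_eq] at h₃
    simp only [mem_filter, mem_univ, true_and]
    exact le_trans (by omega) h₃
  have := card_le_card hsub
  rw [card_map, card_subtype, filter_ne'] at this
  have := pred_card_le_card_erase (s := X) (a := w)
  omega

end CliqueDegree

structure CardsMatchOn {V : Type} (G H : SimpleGraph V) (S : Finset V) (f : V → V) : Prop where
  injOn : Set.InjOn f S
  iso : ∀ v ∈ S, Nonempty (gcard G v ≃g gcard H (f v))

section CardsMatchOn

open scoped Classical

variable {V : Type} [Fintype V] [DecidableEq V] {G H : SimpleGraph V} {S : Finset V}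
  {f : V → V} {d k j Δ : ℕ} {v : V}

theorem CardsMatchOn.cliqueDegree_add_card (hM : CardsMatchOn G H S f) (j : ℕ) {u : V}
    (hu : u ∈ S) :
    cliqueDegree G j u + #(H.cliqueFinset j) = cliqueDegree H j (f u) + #(G.cliqueFinset j) :=
  cliqueDegree_add_card_cliqueFinset_of_iso_gcard (hM.iso u hu).some j

theorem CardsMatchOn.degree_add_card_cliqueFinset_two (hM : CardsMatchOn G H S f) {u : V}
    (hu : u ∈ S) : G.degree u + #(H.cliqueFinset 2) = H.degree (f u) + #(G.cliqueFinset 2) := by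
  simpa only [cliqueDegree_two] using hM.cliqueDegree_add_card 2 hu

theorem CardsMatchOn.sublevelCount_le_of_card_eq_add (hM : CardsMatchOn G H S f)
    (hS : Fintype.card V ≤ #S + k) (hv : v ∈ S)
    (hN : #(G.cliqueFinset j) = #(H.cliqueFinset j) + Δ) (hΔ : 0 < Δ) (T : ℕ) :
    sublevelCount G j T ≤ (T / Δ + 1) * (k + G.degree v + 1) := by
  have hx (u) (hu : u ∈ S) : cliqueDegree G j u = cliqueDegree H j (f u) + Δ := by
    have := hM.cliqueDegree_add_card j hu
    omega
  refine Nat.le_div_add_one_mul_of_le_add hΔ (fun T hT => ?_) (fun T => ?_) T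
  · -- below `Δ` only unmatched vertices are counted
    have := hM.injOn.card_filter_le_add_of_imp_comp (p := (cliqueDegree G j · ≤ T))
      (q := fun _ => False) fun u hu h => by have := hx u hu; omega
    simp only [filter_false, card_empty] at this
    unfold sublevelCount
    omega
  · have h₁ := hM.injOn.card_filter_le_add_of_imp_comp (p := (cliqueDegree G j · ≤ T + Δ))
      (q := (cliqueDegree H j · ≤ T)) fun u hu h => by have := hx u hu; omega
    have h₂ := sublevelCount_le_of_iso_gcard (hM.iso v hv).some.symm j T
    unfold sublevelCount at *
    omega

theorem CardsMatchOn.sublevelCount_le_of_add_eq_card (hM : CardsMatchOn G H S f)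
    (hS : Fintype.card V ≤ #S + k) (hv : v ∈ S)
    (hN : #(G.cliqueFinset j) + Δ = #(H.cliqueFinset j)) (hΔ : 0 < Δ) (T : ℕ) :
    sublevelCount G j T ≤ (T / Δ + 1) * (k + H.degree (f v) + 1) := by
  have hx (u) (hu : u ∈ S) : cliqueDegree H j (f u) = cliqueDegree G j u + Δ := by
    have := hM.cliqueDegree_add_card j hu
    omega
  have hpivot := sublevelCount_le_of_iso_gcard (hM.iso v hv).some j
  refine Nat.le_div_add_one_mul_of_le_add hΔ (fun T hT => ?_) (fun T => ?_) T
  · have := hM.injOn.card_filter_le_add_of_comp_imp (q := (cliqueDegree H j · ≤ T))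
      (p := fun _ => False) fun u hu h => by have := hx u hu; omega
    simp only [filter_false, card_empty] at this
    have := hpivot T
    unfold sublevelCount at *
    omega
  · have h₁ := hM.injOn.card_filter_le_add_of_comp_imp (q := (cliqueDegree H j · ≤ T + Δ))
      (p := (cliqueDegree G j · ≤ T)) fun u hu h => by have := hx u hu; omega
    have := hpivot (T + Δ)
    unfold sublevelCount at *
    omega

theorem CardsMatchOn.sublevelCount_le_of_card_cliqueFinset_ne (hM : CardsMatchOn G H S f)
    (hS : Fintype.card V ≤ #S + k) (hv : v ∈ S)
    (hne : #(G.cliqueFinset j) ≠ #(H.cliqueFinset j)) {D : ℕ} (hG : G.degree v ≤ D)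
    (hH : H.degree (f v) ≤ D) (T : ℕ) :
    sublevelCount G j T ≤ (T + 1) * (k + D + 1) := by
  rcases hne.lt_or_gt with hlt | hgt
  · obtain ⟨Δ, hΔ⟩ := Nat.exists_eq_add_of_lt hlt
    calc _ ≤ (T / (Δ + 1) + 1) * (k + H.degree (f v) + 1) :=
          hM.sublevelCount_le_of_add_eq_card hS hv (by omega) Δ.succ_pos T
      _ ≤ _ := by gcongr; exact Nat.div_le_self _ _
  · obtain ⟨Δ, hΔ⟩ := Nat.exists_eq_add_of_lt hgt
    calc _ ≤ (T / (Δ + 1) + 1) * (k + G.degree v + 1) :=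
          hM.sublevelCount_le_of_card_eq_add hS hv (by omega) Δ.succ_pos T
      _ ≤ _ := by gcongr; exact Nat.div_le_self _ _

theorem CardsMatchOn.le_of_card_cliqueFinset_ne (hM : CardsMatchOn G H S f)
    (hS : Fintype.card V ≤ #S + k) (hk : 2 * k + 2 ≤ Fintype.card V)
    (havg : 2 * #G.edgeFinset ≤ d * Fintype.card V) (hj : 2 ≤ j)
    (hne : #(G.cliqueFinset j) ≠ #(H.cliqueFinset j)) : j ≤ 2 * (d + 1) := by
  obtain ⟨u₀, hu₀⟩ : S.Nonempty := card_pos.1 (by omega)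
  have hX : #S ≤ #{u | j - 2 ≤ G.degree u} + 1 := by
    rcases hne.lt_or_gt with hlt | hgt
    · have := card_le_card_filter_le_degree_add_one_of_iso_gcard (hM.iso u₀ hu₀).some
        (X := S.image f) (t := j - 2) ?_
      · rwa [card_image_of_injOn hM.injOn] at this
      · simp only [mem_image]
        rintro _ ⟨u, hu, rfl⟩
        have := hM.cliqueDegree_add_card j hu
        have := le_degree_of_cliqueDegree_pos (A := H) (j := j) (u := f u) (by omega)
        omega
    · refine (card_le_card fun u hu => ?_).trans (Nat.le_succ _)
      have := hM.cliqueDegree_add_card j hu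
      have := le_degree_of_cliqueDegree_pos (A := G) (j := j) (u := u) (by omega)
      simp only [mem_filter, mem_univ, true_and]
      omega
  have := card_mul_le_sum_degree G (X := {u | j - 2 ≤ G.degree u}) (t := j - 2)
    fun x hx => (mem_filter.1 hx).2
  obtain ⟨t, rfl⟩ : ∃ t, j = t + 2 := ⟨j - 2, by omega⟩
  simp only [Nat.add_sub_cancel] at *
  nlinarith

theorem CardsMatchOn.le_of_card_cliqueFinset_two_add_eq (hM : CardsMatchOn G H S f)
    (havg : 2 * #G.edgeFinset ≤ d * Fintype.card V) (hS : Fintype.card V + 4 ≤ 2 * #S)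
    (hN : #(G.cliqueFinset 2) + Δ = #(H.cliqueFinset 2)) : Δ ≤ 2 * d := by
  have hsum := hM.injOn.card_mul_le_of_le_cliqueDegree (A := H) (j := 2) (Δ := Δ)
    fun u hu => by have := hM.degree_add_card_cliqueFinset_two hu; rw [cliqueDegree_two]; omega
  rw [← hN, card_cliqueFinset_two G] at hsum
  by_contra! h
  nlinarith [Nat.mul_le_mul_right Δ hS, Nat.mul_le_mul_left (Fintype.card V) h, card_le_univ S]

theorem CardsMatchOn.card_cliqueFinset_two_eq (hM : CardsMatchOn G H S f)
    (hS : Fintype.card V ≤ #S + k) (havg : 2 * #G.edgeFinset ≤ d * Fintype.card V)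
    (hv : v ∈ S) (hdeg : G.degree v ≤ d + 1)
    (hk : 2 * ((2 * d + 3) * (k + d + 6)) ≤ Fintype.card V) :
    #(G.cliqueFinset 2) = #(H.cliqueFinset 2) := by
  have hmass := card_le_two_mul_sublevelCount G havg 2
  rw [Nat.choose_one_right] at hmass
  rcases lt_trichotomy #(G.cliqueFinset 2) #(H.cliqueFinset 2) with hlt | heq | hgt
  · exfalso
    obtain ⟨Δ, hΔ⟩ := Nat.exists_eq_add_of_lt hlt
    have hΔle := hM.le_of_card_cliqueFinset_two_add_eq (Δ := Δ + 1) havg (by nlinarith)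
      (by omega)
    have hdegH : H.degree (f v) = G.degree v + (Δ + 1) := by
      have := hM.degree_add_card_cliqueFinset_two hv
      omega
    have hwin := hM.sublevelCount_le_of_add_eq_card (j := 2) (Δ := Δ + 1) hS hv (by omega)
      Δ.succ_pos (2 * (d + 1))
    set q := 2 * (d + 1) / (Δ + 1)
    have hq : q * (Δ + 1) ≤ 2 * (d + 1) := Nat.div_mul_le_self _ _
    have hK : (q + 1) * (k + G.degree v + 1) ≤ (2 * d + 3) * (k + d + 2) :=
      Nat.mul_le_mul (by have := Nat.div_le_self (2 * (d + 1)) (Δ + 1); omega) (by omega)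
    rw [hdegH] at hwin
    nlinarith
  · exact heq
  · exfalso
    obtain ⟨Δ, hΔ⟩ := Nat.exists_eq_add_of_lt hgt
    have hwin := hM.sublevelCount_le_of_card_eq_add (j := 2) (Δ := Δ + 1) hS hv (by omega)
      Δ.succ_pos (2 * (d + 1))
    have hK : (2 * (d + 1) / (Δ + 1) + 1) * (k + G.degree v + 1) ≤ (2 * d + 3) * (k + d + 2) :=
      Nat.mul_le_mul (by have := Nat.div_le_self (2 * (d + 1)) (Δ + 1); omega) (by omega)
    nlinarith

end CardsMatchOn

theorem clique_count_reconstruction_general {n d r k : ℕ}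
    (G H : SimpleGraph (Fin n))
    (havg : 2 * ecount G ≤ d * n)
    (hk : 2 * ((k + d + 5) * (1 + Nat.choose (2 * (d + 1)) (r - 1)) + 1 +
        Nat.choose (2 * (d + 1)) (r - 1)) ≤ n)
    (hshare : SharesCards G H (n - k)) :
    cliqueCount G r = cliqueCount H r := by
  classical
  rcases le_or_gt r 1 with hr | hr
  · exact cliqueCount_eq_of_le_one hr
  obtain ⟨S, f, hSk, hf, hiso⟩ := hshare
  have hM : CardsMatchOn G H S f := ⟨hf, hiso⟩
  set c := (2 * (d + 1)).choose (r - 1)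
  have hn := Fintype.card_fin n
  replace havg : 2 * #G.edgeFinset ≤ d * Fintype.card (Fin n) := by
    rwa [hn, ← ecount_eq_card_edgeFinset]
  have hS : Fintype.card (Fin n) ≤ #S + k := by omega
  rw [cliqueCount_eq_card_cliqueFinset, cliqueCount_eq_card_cliqueFinset]
  by_contra hne
  have hrd := hM.le_of_card_cliqueFinset_ne hS (by nlinarith) havg hr hne
  have hc : 2 * (d + 1) ≤ c := Nat.self_le_choose (by omega) (by omega)
  have hk' : 2 * ((2 * d + 3) * (k + d + 6)) ≤ Fintype.card (Fin n) := by nlinarith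
  obtain ⟨v, hv, hdeg⟩ := exists_mem_degree_le G havg hS (by nlinarith)
  have hdegH := hM.degree_add_card_cliqueFinset_two hv
  rw [hM.card_cliqueFinset_two_eq hS havg hv hdeg hk', add_left_inj] at hdegH
  have hwin := hM.sublevelCount_le_of_card_cliqueFinset_ne hS hv hne hdeg (hdegH ▸ hdeg) c
  have hmass := card_le_two_mul_sublevelCount G havg r
  nlinarith

/-- The number of `r`-cliques of a graph with average degree at most `d` can be
reconstructed from any deck missing at most
`(n/2 - 1)/(1 + C(2(d+1), r-1)) - d - 5` cards. -/
theorem clique_count_reconstruction {n d r k : ℕ} (hd : 1 ≤ d) (hr : 1 ≤ r)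
    (G H : SimpleGraph (Fin n))
    (havg : 2 * ecount G ≤ d * n)
    (hk : 2 * ((k + d + 5) * (1 + Nat.choose (2 * (d + 1)) (r - 1)) + 1 +
        Nat.choose (2 * (d + 1)) (r - 1)) ≤ n)
    (hshare : SharesCards G H (n - k)) :
    cliqueCount G r = cliqueCount H r :=
  clique_count_reconstruction_general G H havg hk hshare
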